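/- Define φ(r,s,u,v) := -(s^T Ξ v u^T + u^T Ξ s v^T) Ξ r · s^T Ξ r + (s-r)^T Ξ (u v^T Ξ s u^T + v s^T Ξ u v^T - 2 v v^T Ξ u u^T) Ξ r - 2 u^T Ξ r · (s-r)^T Ξ v · (r+u)^T Ξ (s-r+v), where Ξ ∈ ℝ^{n×n} is antisymmetric. Then for all r, s, u, v ∈ ℝ^n, φ(s-r, s, u, v) = -φ(r, s, u, v). -/
import Mathlib


open Matrix

noncomputable def phiFun {n : ℕ} (Ξ : Matrix (Fin n) (Fin n) ℝ)
    (r s u v : Fin n → ℝ) : ℝ :=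
  -(((s ⬝ᵥ Ξ *ᵥ v) * (u ⬝ᵥ Ξ *ᵥ r) + (u ⬝ᵥ Ξ *ᵥ s) * (v ⬝ᵥ Ξ *ᵥ r)) * (s ⬝ᵥ Ξ *ᵥ r))
  + (((s - r) ⬝ᵥ Ξ *ᵥ u) * (v ⬝ᵥ Ξ *ᵥ s) * (u ⬝ᵥ Ξ *ᵥ r)
     + ((s - r) ⬝ᵥ Ξ *ᵥ v) * (s ⬝ᵥ Ξ *ᵥ u) * (v ⬝ᵥ Ξ *ᵥ r)
     - 2 * ((s - r) ⬝ᵥ Ξ *ᵥ v) * (v ⬝ᵥ Ξ *ᵥ u) * (u ⬝ᵥ Ξ *ᵥ r))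
  - 2 * (u ⬝ᵥ Ξ *ᵥ r) * ((s - r) ⬝ᵥ Ξ *ᵥ v) * ((r + u) ⬝ᵥ Ξ *ᵥ (s - r + v))

theorem phi_antisymmetric {n : ℕ} (Ξ : Matrix (Fin n) (Fin n) ℝ) (hΞ : Ξᵀ = -Ξ) :
    ∀ r s u v : Fin n → ℝ, phiFun Ξ (s - r) s u v = -phiFun Ξ r s u v := by
  have hB : ∀ x y : Fin n → ℝ, x ⬝ᵥ Ξ *ᵥ y = -(y ⬝ᵥ Ξ *ᵥ x) := by
    intro x y
    rw [dotProduct_mulVec, ← mulVec_transpose, hΞ, neg_mulVec, neg_dotProduct,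
      dotProduct_comm, dotProduct_mulVec]
  have h0 : ∀ x : Fin n → ℝ, x ⬝ᵥ Ξ *ᵥ x = 0 := by
    intro x; have := hB x x; linarith
  intro r s u v
  simp only [phiFun, sub_dotProduct, add_dotProduct, mulVec_sub, mulVec_add,
    dotProduct_sub, dotProduct_add]
  simp only [h0, hB s r, hB u r, hB v r, hB u s, hB v s, hB v u]
  ring
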